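/- arXiv:0902.2853 — 3 statements merged into one kernel-verified Lean document; each statement's English description precedes it below -/
import Mathlib

section
/- Let K be a field of characteristic zero, K[[x]]⁺ := {μ ∈ K[[x]] : ν(μ) > 0} and 𝔐⁺ := {σ ∈ K[[x]] : ν(σ) > 1}. Then K[[x]]⁺ × 𝔐⁺ is a two-sided ideal of the Riordan near algebra: it is a K-subspace of K[[x]] × 𝔐, and for every (μ,σ) ∈ K[[x]] × 𝔐 and every (μ₊,σ₊) ∈ K[[x]]⁺ × 𝔐⁺, both (μ,σ) ⋊ (μ₊,σ₊) and (μ₊,σ₊) ⋊ (μ,σ) belong to K[[x]]⁺ × 𝔐⁺. -/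
/-!
Common setting: `K[[x]]` is `PowerSeries K` for a field `K` of characteristic zero.
`PowerSeries.order` (valued in `ℕ∞ = WithTop ℕ`) is the order/valuation `ν`; note that
multiplication and powers on `ℕ∞` obey exactly the conventions of the paper
(`⊤ * n = ⊤` for `n ≠ 0`, `⊤ * 0 = 0`, `⊤ ^ n = ⊤` for `n ≥ 1`, `m ^ 0 = 1`).
-/

noncomputable section

/-- Formal substitution `f ∘ σ = ∑_n f_n σ^n`, defined coefficientwise: the coefficient
of `x^k` is `∑_{n ≤ k} f_n ⟨σ^n, x^k⟩`.  When the constant term of `σ` is zero this is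
exactly the formal substitution (the omitted terms `n > k` contribute `0` since then
`coeff k (σ^n) = 0`). -/
def pscomp {K : Type*} [Field K] (f σ : PowerSeries K) : PowerSeries K :=
  PowerSeries.mk fun k =>
    ∑ n ∈ Finset.range (k + 1), PowerSeries.coeff n f * PowerSeries.coeff k (σ ^ n)

/-- Compositional powers: `σ^{∘0} = x`, `σ^{∘(n+1)} = σ^{∘n} ∘ σ`. -/
def compPow {K : Type*} [Field K] (σ : PowerSeries K) : ℕ → PowerSeries K
  | 0 => PowerSeries.X
  | n + 1 => pscomp (compPow σ n) σ

/-- The Riordan near-algebra multiplication on `K[[x]] × 𝔐`: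
`(μ₁,σ₁) ⋊ (μ₂,σ₂) := ((μ₁ ∘ σ₂)·μ₂, σ₁ ∘ σ₂)`. -/
def rmul {K : Type*} [Field K] (p q : PowerSeries K × PowerSeries K) :
    PowerSeries K × PowerSeries K :=
  (pscomp p.1 q.2 * q.1, pscomp p.2 q.2)

/-- `⋊`-powers: `p^{⋊0} = (1, x)`, `p^{⋊(n+1)} = p^{⋊n} ⋊ p`. -/
def rpow {K : Type*} [Field K] (p : PowerSeries K × PowerSeries K) :
    ℕ → PowerSeries K × PowerSeries K
  | 0 => (1, PowerSeries.X)
  | n + 1 => rmul (rpow p n) p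

/-- The product (coefficientwise) topology on `K[[x]]`, the coefficient field `K`
carrying the discrete topology `⊥`. -/
def psTop (K : Type*) : TopologicalSpace (PowerSeries K) :=
  @Pi.topologicalSpace (Unit →₀ ℕ) (fun _ => K) (fun _ => ⊥)

/-!
Everything is controlled by the orders of the factors: substitution never lowers the order of
the outer series, `f ∘ σ` has order at least `ν(σ)` as soon as `f(0) = 0`, and the order of a
product bounds that of each factor from above. So each component of either product inherits
its bound from the factor taken in `K[[x]]⁺ × 𝔐⁺`.
-/

namespace PowerSeries

section Semiring

variable {R : Type*} [Semiring R]

theorem order_le_order_mul_left (f g : R⟦X⟧) : g.order ≤ (f * g).order :=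
  le_add_self.trans (le_order_mul f g)

theorem order_le_order_mul_right (f g : R⟦X⟧) : f.order ≤ (f * g).order :=
  le_self_add.trans (le_order_mul f g)

theorem lt_order_add {n : ℕ∞} {f g : R⟦X⟧} (hf : n < f.order) (hg : n < g.order) :
    n < (f + g).order :=
  (lt_min hf hg).trans_le (min_order_le_order_add f g)

end Semiring

variable {K : Type*} [Field K]

theorem order_le_order_pscomp_left (f σ : K⟦X⟧) : f.order ≤ (pscomp f σ).order := by
  refine le_order _ _ fun i hi => ?_
  rw [pscomp, coeff_mk]
  refine Finset.sum_eq_zero fun n hn => ?_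
  have hni : (n : ℕ∞) ≤ i := by exact_mod_cast Nat.lt_succ_iff.mp (Finset.mem_range.mp hn)
  rw [coeff_of_lt_order n (hni.trans_lt hi), zero_mul]

theorem order_le_order_pscomp_right {f : K⟦X⟧} (hf : constantCoeff f = 0) (σ : K⟦X⟧) :
    σ.order ≤ (pscomp f σ).order := by
  refine le_order _ _ fun i hi => ?_
  rw [pscomp, coeff_mk]
  refine Finset.sum_eq_zero fun n _ => ?_
  rcases Nat.eq_zero_or_pos n with rfl | hn
  · rw [coeff_zero_eq_constantCoeff_apply, hf, zero_mul]
  · have hσn : σ.order ≤ (σ ^ n).order := by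
      rw [order_pow]
      simpa using nsmul_le_nsmul_left (zero_le (a := σ.order)) hn
    rw [coeff_of_lt_order i (hi.trans_le hσn), mul_zero]

end PowerSeries

open PowerSeries in
theorem stmt_8_general {K : Type*} [Field K] :
    ((0 : ℕ∞) < (0 : PowerSeries K).order ∧ (1 : ℕ∞) < (0 : PowerSeries K).order) ∧
    (∀ p q : PowerSeries K × PowerSeries K,
      0 < p.1.order ∧ 1 < p.2.order → 0 < q.1.order ∧ 1 < q.2.order →
      0 < (p + q).1.order ∧ 1 < (p + q).2.order) ∧
    (∀ (α : K) (p : PowerSeries K × PowerSeries K),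
      0 < p.1.order ∧ 1 < p.2.order →
      0 < (α • p).1.order ∧ 1 < (α • p).2.order) ∧
    (∀ p q : PowerSeries K × PowerSeries K,
      PowerSeries.constantCoeff p.2 = 0 →
      0 < q.1.order ∧ 1 < q.2.order →
      (0 < (rmul p q).1.order ∧ 1 < (rmul p q).2.order) ∧
      (0 < (rmul q p).1.order ∧ 1 < (rmul q p).2.order)) := by
  refine ⟨by simp, ?_, ?_, ?_⟩
  · rintro p q ⟨hp₁, hp₂⟩ ⟨hq₁, hq₂⟩
    exact ⟨lt_order_add hp₁ hq₁, lt_order_add hp₂ hq₂⟩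
  · rintro α p ⟨hp₁, hp₂⟩
    exact ⟨hp₁.trans_le le_order_smul, hp₂.trans_le le_order_smul⟩
  · rintro p q hp ⟨hq₁, hq₂⟩
    refine ⟨⟨?_, ?_⟩, ⟨?_, ?_⟩⟩
    · exact hq₁.trans_le (order_le_order_mul_left _ _)
    · exact hq₂.trans_le (order_le_order_pscomp_right hp _)
    · exact hq₁.trans_le <|
        (order_le_order_pscomp_left _ _).trans (order_le_order_mul_right _ _)
    · exact hq₂.trans_le (order_le_order_pscomp_left _ _)

/-- `K[[x]]⁺ × 𝔐⁺` (pairs `(μ,σ)` with `ν(μ) > 0` and `ν(σ) > 1`) is a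
two-sided ideal of the Riordan near algebra: it is a `K`-subspace of `K[[x]] × 𝔐`
(contains `(0,0)`, closed under `+` and scalar multiplication) and it absorbs `⋊` on
both sides. -/
theorem stmt_8 {K : Type*} [Field K] [CharZero K] :
    ((0 : ℕ∞) < (0 : PowerSeries K).order ∧ (1 : ℕ∞) < (0 : PowerSeries K).order) ∧
    (∀ p q : PowerSeries K × PowerSeries K,
      0 < p.1.order ∧ 1 < p.2.order → 0 < q.1.order ∧ 1 < q.2.order →
      0 < (p + q).1.order ∧ 1 < (p + q).2.order) ∧
    (∀ (α : K) (p : PowerSeries K × PowerSeries K),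
      0 < p.1.order ∧ 1 < p.2.order →
      0 < (α • p).1.order ∧ 1 < (α • p).2.order) ∧
    (∀ p q : PowerSeries K × PowerSeries K,
      PowerSeries.constantCoeff p.2 = 0 →
      0 < q.1.order ∧ 1 < q.2.order →
      (0 < (rmul p q).1.order ∧ 1 < (rmul p q).2.order) ∧
      (0 < (rmul q p).1.order ∧ 1 < (rmul q p).2.order)) :=
  stmt_8_general
end
end

section
/- Let K be a field of characteristic zero with the discrete topology, equip K[[x]] × 𝔐 with the product topology, and let (μ₊, σ₊) satisfy ν(μ₊) > 0 and ν(σ₊) > 1. Then for every formal power series f = ∑_{n≥0} f_n x^n ∈ K[[x]], the family (f_n · (μ₊,σ₊)^{⋊n})_{n∈ℕ} is summable in K[[x]] × 𝔐; that is, every formal power series operates on the ideal K[[x]]⁺ × 𝔐⁺ of the Riordan near algebra. -/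
/-!
Common setting: `K[[x]]` is `PowerSeries K` for a field `K` of characteristic zero.
`PowerSeries.order` (valued in `ℕ∞ = WithTop ℕ`) is the order/valuation `ν`; note that
multiplication and powers on `ℕ∞` obey exactly the conventions of the paper
(`⊤ * n = ⊤` for `n ≠ 0`, `⊤ * 0 = 0`, `⊤ ^ n = ⊤` for `n ≥ 1`, `m ^ 0 = 1`).
-/

noncomputable section

/-!
The order of the `n`-th `⋊`-power of `(μ₊, σ₊)` is at least `n` in both components:
substituting into `σ₊` at least doubles the order (as `ν(σ₊) ≥ 2`) and multiplying by `μ₊`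
raises it by one. Hence the orders of the terms of the family tend to infinity, and in the
coefficientwise topology every coefficient of the partial sums is eventually constant.
-/

open PowerSeries Filter

section Order

variable {K : Type*} [Field K]

theorem le_order_pscomp {g σ : K⟦X⟧} {m s : ℕ} (hg : (m : ℕ∞) ≤ g.order)
    (hσ : (s : ℕ∞) ≤ σ.order) : ((m * s : ℕ) : ℕ∞) ≤ (pscomp g σ).order := by
  refine nat_le_order _ _ fun k hk => ?_
  rw [pscomp, coeff_mk]
  refine Finset.sum_eq_zero fun n _ => ?_
  rcases lt_or_ge n m with hn | hn
  · rw [coeff_of_lt_order n ((Nat.cast_lt.mpr hn).trans_le hg), zero_mul]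
  · have hk_lt : (k : ℕ∞) < (σ ^ n).order := calc
      (k : ℕ∞) < ((m * s : ℕ) : ℕ∞) := Nat.cast_lt.mpr hk
      _ ≤ n • σ.order := by
        rw [nsmul_eq_mul, Nat.cast_mul]
        exact mul_le_mul' (Nat.cast_le.mpr hn) hσ
      _ ≤ (σ ^ n).order := le_order_pow σ n
    rw [coeff_of_lt_order k hk_lt, mul_zero]

theorem le_order_rpow {μ σ : K⟦X⟧} (hμ : 0 < μ.order) (hσ : 1 < σ.order) (n : ℕ) :
    (n : ℕ∞) ≤ (rpow (μ, σ) n).1.order ∧ ((n + 1 : ℕ) : ℕ∞) ≤ (rpow (μ, σ) n).2.order := by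
  have hμ' : ((1 : ℕ) : ℕ∞) ≤ μ.order := Order.one_le_iff_pos.mpr hμ
  have hσ' : ((2 : ℕ) : ℕ∞) ≤ σ.order := Order.add_one_le_of_lt hσ
  induction n with
  | zero => simp [rpow, order_X]
  | succ n ih =>
    constructor
    · calc ((n + 1 : ℕ) : ℕ∞) ≤ ((n * 2 + 1 : ℕ) : ℕ∞) := Nat.cast_le.mpr (by omega)
        _ ≤ (pscomp (rpow (μ, σ) n).1 σ).order + μ.order := by
          rw [Nat.cast_add]; exact add_le_add (le_order_pscomp ih.1 hσ') hμ'
        _ ≤ _ := le_order_mul _ _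
    · calc ((n + 1 + 1 : ℕ) : ℕ∞) ≤ (((n + 1) * 2 : ℕ) : ℕ∞) := Nat.cast_le.mpr (by omega)
        _ ≤ _ := le_order_pscomp ih.2 hσ'

end Order

theorem summable_of_natCast_le_order {R : Type*} [Semiring R] (a : ℕ → R⟦X⟧)
    (h : ∀ n : ℕ, (n : ℕ∞) ≤ (a n).order) :
    letI : TopologicalSpace R⟦X⟧ := psTop R
    Summable a :=
  letI : TopologicalSpace R := ⊥
  WithPiTopology.summable_of_tendsto_order_atTop_nhds_top _
    (tendsto_nhds_top_mono ENat.tendsto_natCast_nhds_top (Eventually.of_forall h))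

theorem stmt_12_general {K : Type*} [Field K] (μp σp : PowerSeries K)
    (hμ : 0 < μp.order) (hσ : 1 < σp.order) (f : PowerSeries K) :
    letI : TopologicalSpace (PowerSeries K) := psTop K
    Summable (fun n : ℕ => PowerSeries.coeff n f • rpow (μp, σp) n) := by
  let _ : TopologicalSpace (PowerSeries K) := psTop K
  have hord := le_order_rpow hμ hσ
  obtain ⟨a, ha⟩ := summable_of_natCast_le_order (fun n => coeff n f • (rpow (μp, σp) n).1)
    fun n : ℕ => (hord n).1.trans le_order_smul
  obtain ⟨b, hb⟩ := summable_of_natCast_le_order (fun n => coeff n f • (rpow (μp, σp) n).2)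
    fun n : ℕ => (Nat.cast_le.mpr n.le_succ).trans ((hord n).2.trans le_order_smul)
  exact ⟨(a, b), ha.prodMk hb⟩

/-- every formal power series operates on the ideal `K[[x]]⁺ × 𝔐⁺`:
for `ν(μ₊) > 0`, `ν(σ₊) > 1` and every `f = ∑ f_n x^n`, the family
`(f_n • (μ₊,σ₊)^{⋊n})` is summable in `K[[x]] × 𝔐` with the product topology. -/
theorem stmt_12 {K : Type*} [Field K] [CharZero K] (μp σp : PowerSeries K)
    (hμ : 0 < μp.order) (hσ : 1 < σp.order) (f : PowerSeries K) :
    letI : TopologicalSpace (PowerSeries K) := psTop K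
    Summable (fun n : ℕ => PowerSeries.coeff n f • rpow (μp, σp) n) :=
  stmt_12_general μp σp hμ hσ f
end
end

section
/- Let K be a field of characteristic zero with the discrete topology, equip K[[x]] × 𝔐 with the product topology of the coefficientwise topologies, and let (μ₊, σ₊) satisfy ν(μ₊) > 0 and ν(σ₊) > 1. Then (μ₊, σ₊) is topologically nilpotent in the Riordan near algebra: the sequence of ⋊-powers (μ₊,σ₊)^{⋊n} converges to (0,0) as n → ∞. -/
/-!
Common setting: `K[[x]]` is `PowerSeries K` for a field `K` of characteristic zero.
`PowerSeries.order` (valued in `ℕ∞ = WithTop ℕ`) is the order/valuation `ν`; note that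
multiplication and powers on `ℕ∞` obey exactly the conventions of the paper
(`⊤ * n = ⊤` for `n ≠ 0`, `⊤ * 0 = 0`, `⊤ ^ n = ⊤` for `n ≥ 1`, `m ^ 0 = 1`).
-/

noncomputable section

/-!
Both components of `(μ₊,σ₊)^{⋊n}` have order growing at least linearly in `n`: substituting
into `σ₊` multiplies orders by `ν(σ₊) ≥ 2`, and the factor `μ₊` adds `ν(μ₊) ≥ 1`. In the
coefficientwise topology a sequence whose order tends to `∞` tends to `0`, since each
coefficient is eventually `0`.
-/

open Filter Topology PowerSeries

theorem le_order_pscomp_s13 {K : Type*} [Field K] (f σ : PowerSeries K) (a b : ℕ)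
    (hf : (a : ℕ∞) ≤ f.order) (hσ : (b : ℕ∞) ≤ σ.order) :
    ((a * b : ℕ) : ℕ∞) ≤ (pscomp f σ).order := by
  refine le_order _ _ fun k hk => ?_
  rw [pscomp, coeff_mk]
  refine Finset.sum_eq_zero fun n _ => ?_
  rcases lt_or_ge n a with hn | hn
  · rw [coeff_of_lt_order n ((Nat.cast_lt.2 hn).trans_le hf), zero_mul]
  · refine mul_eq_zero_of_right _ (coeff_of_lt_order k ?_)
    calc (k : ℕ∞) < ((a * b : ℕ) : ℕ∞) := hk
      _ ≤ n • σ.order := by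
        rw [nsmul_eq_mul, Nat.cast_mul]
        gcongr
      _ ≤ (σ ^ n).order := le_order_pow σ n

section rpow

variable {K : Type*} [Field K] (μ σ : PowerSeries K)

theorem le_order_rpow_fst (hμ : 1 ≤ μ.order) (hσ : 1 ≤ σ.order) (n : ℕ) :
    (n : ℕ∞) ≤ (rpow (μ, σ) n).1.order := by
  induction n with
  | zero => simp
  | succ n ih =>
    calc ((n + 1 : ℕ) : ℕ∞) = ((n * 1 : ℕ) : ℕ∞) + 1 := by push_cast; ring
      _ ≤ (pscomp (rpow (μ, σ) n).1 σ).order + μ.order := by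
        gcongr
        exact le_order_pscomp_s13 _ _ n 1 ih (by exact_mod_cast hσ)
      _ ≤ (pscomp (rpow (μ, σ) n).1 σ * μ).order := le_order_mul _ _

theorem le_order_rpow_snd (hσ : 2 ≤ σ.order) (n : ℕ) :
    ((n + 1 : ℕ) : ℕ∞) ≤ (rpow (μ, σ) n).2.order := by
  induction n with
  | zero => simp [rpow]
  | succ n ih =>
    calc ((n + 1 + 1 : ℕ) : ℕ∞) ≤ (((n + 1) * 2 : ℕ) : ℕ∞) := by gcongr; omega
      _ ≤ (pscomp (rpow (μ, σ) n).2 σ).order :=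
        le_order_pscomp_s13 _ _ (n + 1) 2 ih (by exact_mod_cast hσ)

end rpow

theorem tendsto_zero_of_tendsto_order {ι K : Type*} [Semiring K] {l : Filter ι}
    {f : ι → PowerSeries K} (h : Tendsto (fun i => (f i).order) l (𝓝 ⊤)) :
    letI : TopologicalSpace (PowerSeries K) := psTop K
    Tendsto f l (𝓝 0) := by
  let _ : TopologicalSpace K := ⊥
  have _ : DiscreteTopology K := ⟨rfl⟩
  -- `psTop K` is definitionally Mathlib's pi topology for the discrete topology on `K`.
  refine (WithPiTopology.tendsto_iff_coeff_tendsto K f l 0).2 fun k => ?_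
  rw [map_zero, nhds_discrete, tendsto_pure]
  filter_upwards [ENat.tendsto_nhds_top_iff_natCast_lt.1 h k] with i hi
  exact coeff_of_lt_order k hi

theorem stmt_13_general {K : Type*} [Field K] (μp σp : PowerSeries K)
    (hμ : 0 < μp.order) (hσ : 1 < σp.order) :
    letI : TopologicalSpace (PowerSeries K) := psTop K
    Filter.Tendsto (fun n : ℕ => rpow (μp, σp) n) Filter.atTop
      (nhds ((0 : PowerSeries K), (0 : PowerSeries K))) := by
  let _ := psTop K
  have hμ1 : 1 ≤ μp.order := Order.one_le_iff_pos.2 hμ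
  have hσ2 : 2 ≤ σp.order := Order.add_one_le_of_lt hσ
  have h_fst := le_order_rpow_fst μp σp hμ1 (one_le_two.trans hσ2)
  have h_snd n := (Nat.cast_le.2 n.le_succ).trans (le_order_rpow_snd μp σp hσ2 n)
  exact .prodMk_nhds
    (tendsto_zero_of_tendsto_order (tendsto_nhds_top_mono' ENat.tendsto_natCast_nhds_top h_fst))
    (tendsto_zero_of_tendsto_order (tendsto_nhds_top_mono' ENat.tendsto_natCast_nhds_top h_snd))

/-- any `(μ₊,σ₊)` with `ν(μ₊) > 0` and `ν(σ₊) > 1` is topologically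
nilpotent in the Riordan near algebra: `(μ₊,σ₊)^{⋊n} → (0,0)` as `n → ∞`. -/
theorem stmt_13 {K : Type*} [Field K] [CharZero K] (μp σp : PowerSeries K)
    (hμ : 0 < μp.order) (hσ : 1 < σp.order) :
    letI : TopologicalSpace (PowerSeries K) := psTop K
    Filter.Tendsto (fun n : ℕ => rpow (μp, σp) n) Filter.atTop
      (nhds ((0 : PowerSeries K), (0 : PowerSeries K))) :=
  stmt_13_general μp σp hμ hσ
end
end
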